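/- The quartic surfaces {k = 0} and {h_{12} = 0} in ℙ^3 are projectively equivalent: there exist a matrix A ∈ GL_4(ℂ) and a scalar c ∈ ℂ* such that k(Ax) = c·h_{12}(x) as polynomials in ℂ[x_0,x_1,x_2,x_3], where k = x_0^4 + x_1^4 + x_2^4 + x_3^4 + 6(x_0^2x_1^2 − x_1^2x_2^2 + x_1^2x_3^2 + x_0^2x_2^2 − x_0^2x_3^2 + x_2^2x_3^2) and h_{12} = x_0^4 + x_1^4 + x_2^4 + x_3^4 + 12 x_0x_1x_2x_3. -/

import Mathlib

open MvPolynomial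

/-- The action of a matrix on a polynomial: `(A f)(x) = f (A x)`. -/
noncomputable def matAct {N : ℕ} (A : Matrix (Fin N) (Fin N) ℂ)
    (f : MvPolynomial (Fin N) ℂ) : MvPolynomial (Fin N) ℂ :=
  MvPolynomial.aeval (fun i => ∑ j, MvPolynomial.C (A i j) * MvPolynomial.X j) f

/-- The quartic form
`k = x₀⁴ + x₁⁴ + x₂⁴ + x₃⁴ + 6(x₀²x₁² − x₁²x₂² + x₁²x₃² + x₀²x₂² − x₀²x₃² + x₂²x₃²)`. -/
noncomputable def kQuartic : MvPolynomial (Fin 4) ℂ :=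
  X 0 ^ 4 + X 1 ^ 4 + X 2 ^ 4 + X 3 ^ 4 +
    6 * (X 0 ^ 2 * X 1 ^ 2 - X 1 ^ 2 * X 2 ^ 2 + X 1 ^ 2 * X 3 ^ 2 +
      X 0 ^ 2 * X 2 ^ 2 - X 0 ^ 2 * X 3 ^ 2 + X 2 ^ 2 * X 3 ^ 2)

/-- The Burnside quartic form `h₁₂ = x₀⁴ + x₁⁴ + x₂⁴ + x₃⁴ + 12·x₀x₁x₂x₃`. -/
noncomputable def h12 : MvPolynomial (Fin 4) ℂ :=
  X 0 ^ 4 + X 1 ^ 4 + X 2 ^ 4 + X 3 ^ 4 + 12 * (X 0 * X 1 * X 2 * X 3)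

/-- The transformation matrix. -/
noncomputable def Amat : Matrix (Fin 4) (Fin 4) ℂ :=
  !![1 + Complex.I, 0, 0, 1 - Complex.I;
     0, 1 + Complex.I, -1 + Complex.I, 0;
     0, -1 + Complex.I, 1 + Complex.I, 0;
     1 - Complex.I, 0, 0, 1 + Complex.I]

/-- Inverse of `Amat`. -/
noncomputable def Ainv : Matrix (Fin 4) (Fin 4) ℂ :=
  !![(1 - Complex.I)/4, 0, 0, (1 + Complex.I)/4;
     0, (1 - Complex.I)/4, -(1 + Complex.I)/4, 0;
     0, -(1 + Complex.I)/4, (1 - Complex.I)/4, 0;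
     (1 + Complex.I)/4, 0, 0, (1 - Complex.I)/4]

lemma Amat_mul_Ainv : Amat * Ainv = 1 := by
  ext i j
  fin_cases i <;> fin_cases j <;>
    norm_num [Matrix.mul_apply, Fin.sum_univ_four, Amat, Ainv, Matrix.one_apply, Complex.ext_iff, Fin.ext_iff, Matrix.cons_val_two, Matrix.cons_val_three]

lemma Ainv_mul_Amat : Ainv * Amat = 1 := by
  ext i j
  fin_cases i <;> fin_cases j <;>
    norm_num [Matrix.mul_apply, Fin.sum_univ_four, Amat, Ainv, Matrix.one_apply, Complex.ext_iff, Fin.ext_iff, Matrix.cons_val_two, Matrix.cons_val_three]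

lemma key : matAct Amat kQuartic = (-32 : ℂ) • h12 := by
  have hJ : (C Complex.I : MvPolynomial (Fin 4) ℂ) ^ 2 = -1 := by
    rw [← map_pow, Complex.I_sq, map_neg, map_one]
  set J : MvPolynomial (Fin 4) ℂ := C Complex.I with hJdef
  simp [matAct, kQuartic, h12, Amat, Fin.sum_univ_four, smul_eq_C_mul,
    map_add, map_sub, map_neg, map_one, map_ofNat, ← hJdef]
  linear_combination ((28 : MvPolynomial (Fin 4) ℂ) * (X 3)^4 +
  (24 : MvPolynomial (Fin 4) ℂ) * (X 2)^2 * (X 3)^2 +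
  (28 : MvPolynomial (Fin 4) ℂ) * (X 2)^4 +
  (-48 : MvPolynomial (Fin 4) ℂ) * (X 1) * (X 2) * (X 3)^2 +
  (16 : MvPolynomial (Fin 4) ℂ) * (X 1) * (X 2)^3 +
  (24 : MvPolynomial (Fin 4) ℂ) * (X 1)^2 * (X 3)^2 +
  (-24 : MvPolynomial (Fin 4) ℂ) * (X 1)^2 * (X 2)^2 +
  (16 : MvPolynomial (Fin 4) ℂ) * (X 1)^3 * (X 2) +
  (28 : MvPolynomial (Fin 4) ℂ) * (X 1)^4 +
  (-16 : MvPolynomial (Fin 4) ℂ) * (X 0) * (X 3)^3 +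
  (48 : MvPolynomial (Fin 4) ℂ) * (X 0) * (X 2)^2 * (X 3) +
  (288 : MvPolynomial (Fin 4) ℂ) * (X 0) * (X 1) * (X 2) * (X 3) +
  (48 : MvPolynomial (Fin 4) ℂ) * (X 0) * (X 1)^2 * (X 3) +
  (-24 : MvPolynomial (Fin 4) ℂ) * (X 0)^2 * (X 3)^2 +
  (24 : MvPolynomial (Fin 4) ℂ) * (X 0)^2 * (X 2)^2 +
  (-48 : MvPolynomial (Fin 4) ℂ) * (X 0)^2 * (X 1) * (X 2) +
  (24 : MvPolynomial (Fin 4) ℂ) * (X 0)^2 * (X 1)^2 +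
  (-16 : MvPolynomial (Fin 4) ℂ) * (X 0)^3 * (X 3) +
  (28 : MvPolynomial (Fin 4) ℂ) * (X 0)^4 +
  (-4 : MvPolynomial (Fin 4) ℂ) * J^2 * (X 3)^4 +
  (24 : MvPolynomial (Fin 4) ℂ) * J^2 * (X 2)^2 * (X 3)^2 +
  (-4 : MvPolynomial (Fin 4) ℂ) * J^2 * (X 2)^4 +
  (48 : MvPolynomial (Fin 4) ℂ) * J^2 * (X 1) * (X 2) * (X 3)^2 +
  (-16 : MvPolynomial (Fin 4) ℂ) * J^2 * (X 1) * (X 2)^3 +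
  (24 : MvPolynomial (Fin 4) ℂ) * J^2 * (X 1)^2 * (X 3)^2 +
  (-24 : MvPolynomial (Fin 4) ℂ) * J^2 * (X 1)^2 * (X 2)^2 +
  (-16 : MvPolynomial (Fin 4) ℂ) * J^2 * (X 1)^3 * (X 2) +
  (-4 : MvPolynomial (Fin 4) ℂ) * J^2 * (X 1)^4 +
  (16 : MvPolynomial (Fin 4) ℂ) * J^2 * (X 0) * (X 3)^3 +
  (-48 : MvPolynomial (Fin 4) ℂ) * J^2 * (X 0) * (X 2)^2 * (X 3) +
  (-96 : MvPolynomial (Fin 4) ℂ) * J^2 * (X 0) * (X 1) * (X 2) * (X 3) +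
  (-48 : MvPolynomial (Fin 4) ℂ) * J^2 * (X 0) * (X 1)^2 * (X 3) +
  (-24 : MvPolynomial (Fin 4) ℂ) * J^2 * (X 0)^2 * (X 3)^2 +
  (24 : MvPolynomial (Fin 4) ℂ) * J^2 * (X 0)^2 * (X 2)^2 +
  (48 : MvPolynomial (Fin 4) ℂ) * J^2 * (X 0)^2 * (X 1) * (X 2) +
  (24 : MvPolynomial (Fin 4) ℂ) * J^2 * (X 0)^2 * (X 1)^2 +
  (16 : MvPolynomial (Fin 4) ℂ) * J^2 * (X 0)^3 * (X 3) +
  (-4 : MvPolynomial (Fin 4) ℂ) * J^2 * (X 0)^4) * hJ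

theorem stmt11 :
    ∃ (A : GL (Fin 4) ℂ) (c : ℂ), c ≠ 0 ∧
      matAct (A : Matrix (Fin 4) (Fin 4) ℂ) kQuartic = c • h12 := by
  refine ⟨⟨Amat, Ainv, Amat_mul_Ainv, Ainv_mul_Amat⟩, -32, by norm_num, ?_⟩
  exact key
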